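/- (Dirichlet-kernel lower bound.) Let λ, A ∈ ℕ with A ≥ 1 and 8A < λ, and let a, b ∈ ℤ satisfy |a| ≤ A and |b| ≤ λ/(2(2A+1)). Then the geometric sum satisfies |∑_{j=0}^{2A−|a|} e^{−2πibj/λ}| ≥ 2A/π. -/

import Mathlib

open Real Complex

/-!
Writing the sum as the geometric sum `∑_{j<N} z ^ j` with `z = e^{2iθ}` and `θ = -πb/λ`, its
modulus is the Dirichlet kernel `|sin (Nθ)| / |sin θ|`. The hypothesis on `b` gives
`N|θ| ≤ π/2`, so Jordan's inequality `|sin (Nθ)| ≥ (2/π) N|θ|` together with `|sin θ| ≤ |θ|`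
bounds it below by `2N/π`, and `N = 2A - |a| + 1 > A`.
-/

namespace Complex

theorem norm_geom_sum_exp_I_mul_two_mul_ofReal (θ : ℝ) (n : ℕ) (hθ : Real.sin θ ≠ 0) :
    ‖∑ j ∈ Finset.range n, exp (I * ↑(2 * θ)) ^ j‖ = |Real.sin (n * θ)| / |Real.sin θ| := by
  have hpow : exp (I * ↑(2 * θ)) ^ n = exp (I * ↑(2 * (n * θ))) := by
    rw [← exp_nat_mul]; push_cast; ring_nf
  have hnorm (x : ℝ) : ‖exp (I * ↑(2 * x)) - 1‖ = 2 * |Real.sin x| := by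
    rw [norm_exp_I_mul_ofReal_sub_one, mul_div_cancel_left₀ x two_ne_zero, norm_mul,
      Real.norm_eq_abs, Real.norm_eq_abs, abs_two]
  have hz : exp (I * ↑(2 * θ)) ≠ 1 := fun h ↦ by
    have := hnorm θ
    rw [h, sub_self, norm_zero] at this
    exact hθ (abs_eq_zero.mp (by linarith))
  rw [geom_sum_eq hz, norm_div, hpow, hnorm, hnorm, mul_div_mul_left _ _ two_ne_zero]

theorem two_mul_div_pi_le_norm_geom_sum_exp_I_mul_two_mul_ofReal (θ : ℝ) (n : ℕ)
    (h : n * |θ| ≤ π / 2) :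
    2 * n / π ≤ ‖∑ j ∈ Finset.range n, exp (I * ↑(2 * θ)) ^ j‖ := by
  rcases Nat.eq_zero_or_pos n with rfl | hn
  · simp
  rcases eq_or_ne θ 0 with rfl | hθ
  · simp only [mul_zero, ofReal_zero, exp_zero, one_pow, Finset.sum_const, Finset.card_range,
      nsmul_eq_mul, mul_one, norm_natCast]
    rw [div_le_iff₀ pi_pos]
    nlinarith [pi_gt_three, (Nat.cast_pos.mpr hn : (0 : ℝ) < n)]
  have hn' : (1 : ℝ) ≤ n := Nat.one_le_cast.mpr hn
  have hθ_pos : 0 < |θ| := abs_pos.mpr hθ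
  have hnθ : |n * θ| ≤ π / 2 := by rwa [abs_mul, Nat.abs_cast]
  have hjordan_n : 2 / π * |n * θ| ≤ |Real.sin (n * θ)| := mul_abs_le_abs_sin hnθ
  have hjordan : 2 / π * |θ| ≤ |Real.sin θ| := mul_abs_le_abs_sin (by nlinarith)
  have hsin_pos : 0 < |Real.sin θ| := lt_of_lt_of_le (by positivity) hjordan
  rw [norm_geom_sum_exp_I_mul_two_mul_ofReal θ n (abs_pos.mp hsin_pos)]
  calc 2 * n / π = 2 / π * |n * θ| / |θ| := by
        rw [abs_mul, Nat.abs_cast]; field_simp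
    _ ≤ |Real.sin (n * θ)| / |Real.sin θ| :=
        div_le_div₀ (abs_nonneg _) hjordan_n hsin_pos abs_sin_le_abs

end Complex

theorem dirichlet_kernel_lower_bound (lam A : ℕ)
    (a b : ℤ) (ha : |a| ≤ (A : ℤ))
    (hb : |(b : ℝ)| ≤ (lam : ℝ) / (2 * (2 * (A : ℝ) + 1))) :
    2 * (A : ℝ) / π ≤
      ‖∑ j ∈ Finset.range (2 * A - a.natAbs + 1),
        Complex.exp (-(2 * (π : ℂ) * Complex.I * (b : ℂ) * (j : ℂ)) / (lam : ℂ))‖ := by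
  set N := 2 * A - a.natAbs + 1
  set θ : ℝ := -(π * b / lam)
  have hterm (j : ℕ) : Complex.exp (-(2 * (π : ℂ) * Complex.I * (b : ℂ) * (j : ℂ)) / (lam : ℂ))
      = Complex.exp (Complex.I * ↑(2 * θ)) ^ j := by
    rw [← Complex.exp_nat_mul]; push_cast [θ]; ring_nf
  have hAN : (A : ℝ) ≤ N := by
    have : a.natAbs ≤ A := by rw [Int.abs_eq_natAbs] at ha; omega
    exact_mod_cast (by omega : A ≤ N)
  have hθ : |θ| * (2 * (2 * A + 1)) ≤ π := by
    rcases Nat.eq_zero_or_pos lam with hlam | hlam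
    · simp [θ, hlam, pi_pos.le]
    have hlam' : (0 : ℝ) < lam := Nat.cast_pos.mpr hlam
    rw [abs_neg, abs_div, abs_mul, abs_of_pos pi_pos, Nat.abs_cast, div_mul_eq_mul_div,
      div_le_iff₀ hlam', mul_assoc]
    gcongr
    rwa [← le_div_iff₀ (by positivity)]
  have hNθ : N * |θ| ≤ π / 2 := by
    have : (N : ℝ) ≤ 2 * A + 1 := by exact_mod_cast (by omega : N ≤ 2 * A + 1)
    nlinarith [abs_nonneg θ]
  simp only [hterm]
  calc 2 * (A : ℝ) / π ≤ 2 * N / π := by gcongr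
    _ ≤ _ := Complex.two_mul_div_pi_le_norm_geom_sum_exp_I_mul_two_mul_ofReal θ N hNθ
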